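/- For all x,y ∈ X, the Peierls barrier satisfies h(x,y) = sup over all critical sub-solutions u and all n,m ∈ ℕ of (T⁻)ⁿu(y) − (T⁺)ᵐu(x) + (n+m)·α[0], the equality holding in ℝ ∪ {+∞}. -/

import Mathlib

open Metric Set Filter Topology

/-- `X` is a `B`-length space at scale `K`. -/
def IsBLengthSpaceAtScale (X : Type*) [MetricSpace X] (B K : ℝ) : Prop :=
  ∀ x y : X, ∃ (n : ℕ) (p : ℕ → X), p 0 = x ∧ p n = y ∧
    (∀ i < n, dist (p i) (p (i + 1)) ≤ K) ∧
    ∑ i ∈ Finset.range n, dist (p i) (p (i + 1)) ≤ B * dist x y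

/-- Uniform superlinearity of the cost `c`. -/
def UniformlySuperlinear {X : Type*} [MetricSpace X] (c : X → X → ℝ) : Prop :=
  ∀ k : ℝ, 0 ≤ k → ∃ C : ℝ, ∀ x y : X, k * dist x y - C ≤ c x y

/-- Uniform boundedness of the cost `c`. -/
def UniformlyBounded {X : Type*} [MetricSpace X] (c : X → X → ℝ) : Prop :=
  ∀ R : ℝ, ∃ A : ℝ, ∀ x y : X, dist x y ≤ R → c x y ≤ A

/-- `u` is `α`-dominated: `u y - u x ≤ c x y + α` for all `x y`. -/
def Dominated {X : Type*} (c : X → X → ℝ) (α : ℝ) (u : X → ℝ) : Prop :=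
  ∀ x y : X, u y - u x ≤ c x y + α

/-- Negative Lax-Oleinik semigroup. -/
noncomputable def Tm {X : Type*} (c : X → X → ℝ) (u : X → ℝ) (x : X) : ℝ :=
  ⨅ y, (u y + c y x)

/-- Positive Lax-Oleinik semigroup. -/
noncomputable def Tp {X : Type*} (c : X → X → ℝ) (u : X → ℝ) (x : X) : ℝ :=
  ⨆ y, (u y - c x y)

/-- The critical constant `α[0]`: the smallest `α` for which `α`-dominated functions exist. -/
noncomputable def critValue {X : Type*} (c : X → X → ℝ) : ℝ :=
  sInf {α : ℝ | ∃ u : X → ℝ, Dominated c α u}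

/-- The Mañé potential `φ(x,y) = sup_u (u y - u x)`, sup over critical sub-solutions. -/
noncomputable def mane {X : Type*} (c : X → X → ℝ) (x y : X) : ℝ :=
  sSup {r : ℝ | ∃ u : X → ℝ, Dominated c (critValue c) u ∧ r = u y - u x}

/-- A bi-infinite sequence is `(u,c,α)`-calibrated if all its finite subchains of
consecutive terms are calibrated. -/
def IsCalibrated {X : Type*} (c : X → X → ℝ) (α : ℝ) (u : X → ℝ) (x : ℤ → X) : Prop :=
  ∀ (m : ℤ) (k : ℕ), u (x (m + k)) =
    u (x m) + (∑ i ∈ Finset.range k, c (x (m + i)) (x (m + i + 1))) + k * α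

/-- The projected Aubry set of a critical sub-solution `u`. -/
def projAubry {X : Type*} (c : X → X → ℝ) (u : X → ℝ) : Set X :=
  {p : X | ∃ x : ℤ → X, IsCalibrated c (critValue c) u x ∧ x 0 = p}

/-- The set `Â_u` of pairs of consecutive terms of calibrated bi-infinite sequences. -/
def aubryPairs {X : Type*} (c : X → X → ℝ) (u : X → ℝ) : Set (X × X) :=
  {q : X × X | ∃ (x : ℤ → X) (n : ℤ),
    IsCalibrated c (critValue c) u x ∧ x n = q.1 ∧ x (n + 1) = q.2}

/-- The projected Aubry set `A = ∩_u A_u`, intersection over all critical sub-solutions. -/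
def projAubrySet {X : Type*} (c : X → X → ℝ) : Set X :=
  {p : X | ∀ u : X → ℝ, Dominated c (critValue c) u → p ∈ projAubry c u}

/-- The Aubry pair set `Â = ∩_u Â_u`, intersection over all critical sub-solutions. -/
def aubryPairsSet {X : Type*} (c : X → X → ℝ) : Set (X × X) :=
  {q : X × X | ∀ u : X → ℝ, Dominated c (critValue c) u → q ∈ aubryPairs c u}

/-- `c_n(x,y)`: infimum of total cost over chains of length `n` from `x` to `y`. -/
noncomputable def cChain {X : Type*} (c : X → X → ℝ) (n : ℕ) (x y : X) : ℝ :=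
  sInf {r : ℝ | ∃ p : ℕ → X, p 0 = x ∧ p n = y ∧
    r = ∑ i ∈ Finset.range n, c (p i) (p (i + 1))}

/-- `φ_n(x,y) = inf_{k ≥ n} (c_k(x,y) + k·α)`. -/
noncomputable def phiN {X : Type*} (c : X → X → ℝ) (α : ℝ) (n : ℕ) (x y : X) : ℝ :=
  sInf {r : ℝ | ∃ k : ℕ, n ≤ k ∧ r = cChain c k x y + k * α}

/-- The Peierls barrier, with values in the extended reals. -/
noncomputable def peierls {X : Type*} (c : X → X → ℝ) (α : ℝ) (x y : X) : EReal :=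
  Filter.liminf (fun n : ℕ => ((cChain c n x y + n * α : ℝ) : EReal)) Filter.atTop

/-- Negative Lax-Oleinik semigroup on extended-real-valued functions. -/
noncomputable def eTm {X : Type*} (c : X → X → ℝ) (u : X → EReal) (x : X) : EReal :=
  ⨅ y, (u y + (c y x : EReal))

/-- Positive Lax-Oleinik semigroup on extended-real-valued functions. -/
noncomputable def eTp {X : Type*} (c : X → X → ℝ) (u : X → EReal) (x : X) : EReal :=
  ⨆ y, (u y - (c x y : EReal))

/-!
Cut a chain of length `k ≥ n + m` from `x` to `y` after its `m`-th point. Along the first `m`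
steps `(T⁺)ᵐu(x)` is at least `u` minus the chain cost, along the last `k - m` steps
`(T⁻)^(k-m)u(y)` is at most `u` plus the chain cost, and `(T⁻)ⁿu ≤ (T⁻)^(k-m)u + (k-m-n)α[0]`
because `T⁻` lowers a critical sub-solution by at most `α[0]`. Hence every term of the
supremum is at most `c_k(x,y) + kα[0]`, and so at most `h(x,y)`.

Conversely, the infimum `φ_N(x,·)` of the `α[0]`-action over chains of length at least `N`
starting at `x` is itself a critical sub-solution (append one step), and `(T⁺)ᴺφ_N(x) ≤ Nα[0]`.
The term `u = φ_N(x,·)`, `n = 0`, `m = N` therefore dominates `inf_{k ≥ N} (c_k(x,y) + kα[0])`.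

That `φ_N` is finite rests on closed chains having nonnegative `α[0]`-action, which is the
limit `α ↓ α[0]` of the same fact for `α`-dominated functions.
-/

section

variable {X : Type*} {c : X → X → ℝ} {α β : ℝ} {u v w : X → ℝ}

def chainCost (c : X → X → ℝ) (k : ℕ) (p : ℕ → X) : ℝ :=
  ∑ i ∈ Finset.range k, c (p i) (p (i + 1))

lemma chainCost_succ (k : ℕ) (p : ℕ → X) :
    chainCost c (k + 1) p = chainCost c k p + c (p k) (p (k + 1)) :=
  Finset.sum_range_succ _ _

lemma chainCost_add (m l : ℕ) (p : ℕ → X) :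
    chainCost c (m + l) p = chainCost c m p + chainCost c l (fun i => p (m + i)) :=
  Finset.sum_range_add _ _ _

lemma chainCost_update_succ (k : ℕ) (p : ℕ → X) (z : X) :
    chainCost c (k + 1) (Function.update p (k + 1) z) = chainCost c k p + c (p k) z := by
  rw [chainCost_succ, Function.update_self, Function.update_of_ne (by omega)]
  congr 1
  refine Finset.sum_congr rfl fun i hi => ?_
  have hik := Finset.mem_range.1 hi
  rw [Function.update_of_ne (by omega), Function.update_of_ne (by omega)]

def NonnegOnCycles (c : X → X → ℝ) (α : ℝ) : Prop :=
  ∀ (k : ℕ) (p : ℕ → X), p k = p 0 → 0 ≤ chainCost c k p + k * α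

lemma NonnegOnCycles.neg_le_chainCost_add (hcyc : NonnegOnCycles c α) {k : ℕ} {p : ℕ → X}
    {x z : X} (hp0 : p 0 = x) (hpk : p k = z) : -(c z x + α) ≤ chainCost c k p + k * α := by
  have hclosed : Function.update p (k + 1) x (k + 1) = Function.update p (k + 1) x 0 := by
    rw [Function.update_self, Function.update_of_ne (by omega), hp0]
  have := hcyc (k + 1) _ hclosed
  rw [chainCost_update_succ, hpk] at this
  push_cast at this
  linarith

lemma le_cChain {k : ℕ} (hk : 0 < k) {x y : X} {a : ℝ}
    (h : ∀ p : ℕ → X, p 0 = x → p k = y → a ≤ chainCost c k p) : a ≤ cChain c k x y := by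
  refine le_csInf ⟨_, Function.update (fun _ => x) k y, ?_, Function.update_self .., rfl⟩ ?_
  · rw [Function.update_of_ne hk.ne]
  · rintro _ ⟨p, hp0, hpk, rfl⟩
    exact h p hp0 hpk

lemma cChain_le_chainCost (hcyc : NonnegOnCycles c α) {k : ℕ} {p : ℕ → X} {x y : X}
    (hp0 : p 0 = x) (hpk : p k = y) : cChain c k x y ≤ chainCost c k p := by
  refine csInf_le ⟨-(c y x + α) - k * α, ?_⟩ ⟨p, hp0, hpk, rfl⟩
  rintro _ ⟨q, hq0, hqk, rfl⟩
  have := hcyc.neg_le_chainCost_add hq0 hqk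
  rw [chainCost] at this
  linarith

lemma Dominated.mono (hu : Dominated c α u) (hαβ : α ≤ β) : Dominated c β u :=
  fun x y => (hu x y).trans (by linarith)

lemma Dominated.le_add_chainCost (hu : Dominated c α u) (k : ℕ) (p : ℕ → X) :
    u (p k) ≤ u (p 0) + chainCost c k p + k * α := by
  induction k with
  | zero => simp [chainCost]
  | succ k ih =>
    rw [chainCost_succ]
    push_cast
    linarith [hu (p k) (p (k + 1))]

lemma Dominated.nonnegOnCycles (hu : Dominated c α u) : NonnegOnCycles c α := by
  intro k p hp
  have := hu.le_add_chainCost k p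
  rw [hp] at this
  linarith

lemma exists_dominated_of_critValue_lt (h : ∃ α u, Dominated c α u) (hβ : critValue c < β) :
    ∃ u, Dominated c β u := by
  obtain ⟨α, u, hu⟩ := h
  obtain ⟨α', ⟨u', hu'⟩, hα'⟩ := exists_lt_of_csInf_lt
    (show {α | ∃ u : X → ℝ, Dominated c α u}.Nonempty from ⟨α, u, hu⟩) hβ
  exact ⟨u', hu'.mono hα'.le⟩

lemma nonnegOnCycles_critValue (h : ∃ α u, Dominated c α u) :
    NonnegOnCycles c (critValue c) := by
  intro k p hp
  have hlim : Tendsto (fun β => chainCost c k p + k * β) (𝓝[>] critValue c)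
      (𝓝 (chainCost c k p + k * critValue c)) :=
    ((continuous_const.add (continuous_const.mul continuous_id)).tendsto _).mono_left
      nhdsWithin_le_nhds
  refine ge_of_tendsto hlim (eventually_nhdsWithin_of_forall fun β hβ => ?_)
  obtain ⟨u, hu⟩ := exists_dominated_of_critValue_lt h hβ
  exact hu.nonnegOnCycles k p hp

lemma UniformlySuperlinear.exists_dominated [MetricSpace X] (hsl : UniformlySuperlinear c) :
    ∃ α u, Dominated c α u := by
  obtain ⟨C, hC⟩ := hsl 0 le_rfl
  refine ⟨C, 0, fun x y => ?_⟩
  have := hC x y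
  simp only [zero_mul, zero_sub, Pi.zero_apply, sub_self] at this ⊢
  linarith

lemma Dominated.Tm_le (hv : Dominated c α v) (w z : X) : Tm c v z ≤ v w + c w z :=
  ciInf_le ⟨v z - α, by rintro _ ⟨w', rfl⟩; linarith [hv w' z]⟩ w

lemma Dominated.sub_le_Tm [Nonempty X] (hv : Dominated c α v) (z : X) : v z - α ≤ Tm c v z :=
  le_ciInf fun w => by linarith [hv w z]

lemma dominated_Tm [Nonempty X] (hv : Dominated c α v) : Dominated c α (Tm c v) :=
  fun z z' => by linarith [hv.Tm_le z z', hv.sub_le_Tm z]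

lemma dominated_iterate_Tm [Nonempty X] (hv : Dominated c α v) (n : ℕ) :
    Dominated c α ((Tm c)^[n] v) := by
  induction n with
  | zero => exact hv
  | succ n ih => rw [Function.iterate_succ_apply']; exact dominated_Tm ih

lemma Dominated.le_Tp (hv : Dominated c α v) (z w : X) : v w - c z w ≤ Tp c v z :=
  le_ciSup (f := fun w => v w - c z w) ⟨v z + α, by rintro _ ⟨w', rfl⟩; linarith [hv z w']⟩ w

lemma Dominated.Tp_le [Nonempty X] (hv : Dominated c α v) (z : X) : Tp c v z ≤ v z + α :=
  ciSup_le fun w => by linarith [hv z w]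

lemma dominated_Tp [Nonempty X] (hv : Dominated c α v) : Dominated c α (Tp c v) :=
  fun z z' => by linarith [hv.le_Tp z z', hv.Tp_le z']

lemma Dominated.Tp_le_Tp_add [Nonempty X] (hw : Dominated c α w) {a : ℝ}
    (hvw : ∀ z, v z ≤ w z + a) (z : X) : Tp c v z ≤ Tp c w z + a :=
  ciSup_le fun z' => by linarith [hvw z', hw.le_Tp z z']

lemma Dominated.iterate_Tm_le_chainCost [Nonempty X] (hv : Dominated c α v) (l : ℕ)
    (q : ℕ → X) : (Tm c)^[l] v (q l) ≤ v (q 0) + chainCost c l q := by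
  induction l with
  | zero => simp [chainCost]
  | succ l ih =>
    rw [Function.iterate_succ_apply', chainCost_succ]
    linarith [(dominated_iterate_Tm hv l).Tm_le (q l) (q (l + 1))]

lemma Dominated.sub_chainCost_le_iterate_Tp [Nonempty X] (hv : Dominated c α v) (m : ℕ)
    (q : ℕ → X) : v (q m) - chainCost c m q ≤ (Tp c)^[m] v (q 0) := by
  induction m generalizing v with
  | zero => simp [chainCost]
  | succ m ih =>
    rw [Function.iterate_succ_apply, chainCost_succ]
    linarith [ih (dominated_Tp hv), hv.le_Tp (q m) (q (m + 1))]

lemma Dominated.iterate_Tm_le_iterate_Tm_add [Nonempty X] (hv : Dominated c α v) (n j : ℕ)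
    (z : X) : (Tm c)^[n] v z ≤ (Tm c)^[n + j] v z + j * α := by
  induction j with
  | zero => simp
  | succ j ih =>
    rw [← add_assoc, Function.iterate_succ_apply']
    push_cast
    linarith [(dominated_iterate_Tm hv (n + j)).sub_le_Tm z]

lemma Dominated.iterate_Tm_sub_iterate_Tp_le_cChain [Nonempty X] (hu : Dominated c α u)
    {m l : ℕ} (hml : 0 < m + l) (x y : X) :
    (Tm c)^[l] u y - (Tp c)^[m] u x ≤ cChain c (m + l) x y := by
  refine le_cChain hml fun p hp0 hpk => ?_
  have hlast := hu.iterate_Tm_le_chainCost l (fun i => p (m + i))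
  have hfirst := hu.sub_chainCost_le_iterate_Tp m p
  simp only [add_zero, hpk, hp0] at hlast hfirst
  rw [chainCost_add]
  linarith

lemma Dominated.iterate_Tm_sub_iterate_Tp_add_le [Nonempty X] (hu : Dominated c α u)
    {n m k : ℕ} (hnm : n + m ≤ k) (hk : 0 < k) (x y : X) :
    (Tm c)^[n] u y - (Tp c)^[m] u x + (n + m) * α ≤ cChain c k x y + k * α := by
  obtain ⟨j, rfl⟩ := Nat.exists_eq_add_of_le hnm
  have hdrift := hu.iterate_Tm_le_iterate_Tm_add n j y
  have hchain := hu.iterate_Tm_sub_iterate_Tp_le_cChain (m := m) (l := n + j) (by omega) x y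
  rw [show m + (n + j) = n + m + j by ring] at hchain
  push_cast
  linarith

/-- `phiN` computed over chains rather than over `cChain`; unlike `phiN` it has no junk value
`cChain c 0 x z = sInf ∅ = 0` at `n = 0`, `z ≠ x`. -/
noncomputable def phiChain (c : X → X → ℝ) (α : ℝ) (n : ℕ) (x z : X) : ℝ :=
  sInf {r | ∃ k, n ≤ k ∧ ∃ p : ℕ → X, p 0 = x ∧ p k = z ∧ r = chainCost c k p + k * α}

lemma phiChain_le (hcyc : NonnegOnCycles c α) {n k : ℕ} (hnk : n ≤ k) {p : ℕ → X} {x z : X}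
    (hp0 : p 0 = x) (hpk : p k = z) : phiChain c α n x z ≤ chainCost c k p + k * α := by
  refine csInf_le ⟨-(c z x + α), ?_⟩ ⟨k, hnk, p, hp0, hpk, rfl⟩
  rintro _ ⟨k', -, q, hq0, hqk, rfl⟩
  exact hcyc.neg_le_chainCost_add hq0 hqk

lemma phiChain_set_nonempty (n : ℕ) (x z : X) :
    {r | ∃ k, n ≤ k ∧ ∃ p : ℕ → X, p 0 = x ∧ p k = z ∧ r = chainCost c k p + k * α}.Nonempty :=
  ⟨_, n + 1, by omega, Function.update (fun _ => x) (n + 1) z,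
    by rw [Function.update_of_ne (by omega)], Function.update_self .., rfl⟩

lemma le_phiChain {n : ℕ} {x z : X} {a : ℝ}
    (h : ∀ k, n ≤ k → ∀ p : ℕ → X, p 0 = x → p k = z → a ≤ chainCost c k p + k * α) :
    a ≤ phiChain c α n x z := by
  refine le_csInf (phiChain_set_nonempty n x z) ?_
  rintro _ ⟨k, hnk, p, hp0, hpk, rfl⟩
  exact h k hnk p hp0 hpk

lemma exists_chain_lt_of_phiChain_lt {n : ℕ} {x z : X} {r : ℝ} (h : phiChain c α n x z < r) :
    ∃ k, n ≤ k ∧ ∃ p : ℕ → X, p 0 = x ∧ p k = z ∧ chainCost c k p + k * α < r := by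
  obtain ⟨_, ⟨k, hnk, p, hp0, hpk, rfl⟩, hlt⟩ :=
    exists_lt_of_csInf_lt (phiChain_set_nonempty n x z) h
  exact ⟨k, hnk, p, hp0, hpk, hlt⟩

lemma phiChain_succ_le (hcyc : NonnegOnCycles c α) (n : ℕ) (x z w : X) :
    phiChain c α (n + 1) x w ≤ phiChain c α n x z + c z w + α := by
  suffices phiChain c α (n + 1) x w - c z w - α ≤ phiChain c α n x z by linarith
  refine le_phiChain fun k hnk p hp0 hpk => ?_
  have := phiChain_le hcyc (by omega : n + 1 ≤ k + 1)
    (by rw [Function.update_of_ne (by omega), hp0]) (Function.update_self (k + 1) w p)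
  rw [chainCost_update_succ, hpk] at this
  push_cast at this
  linarith

lemma phiChain_le_succ (hcyc : NonnegOnCycles c α) (n : ℕ) (x z : X) :
    phiChain c α n x z ≤ phiChain c α (n + 1) x z :=
  le_phiChain fun _ hk _ hp0 hpk => phiChain_le hcyc (by omega) hp0 hpk

lemma dominated_phiChain (hcyc : NonnegOnCycles c α) (n : ℕ) (x : X) :
    Dominated c α (phiChain c α n x) :=
  fun z w => by linarith [phiChain_succ_le hcyc n x z w, phiChain_le_succ hcyc n x w]

lemma phiChain_zero_self_nonpos (hcyc : NonnegOnCycles c α) (x : X) : phiChain c α 0 x x ≤ 0 := by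
  simpa [chainCost] using phiChain_le hcyc (k := 0) le_rfl (p := fun _ => x) rfl rfl

lemma iterate_Tp_phiChain_le [Nonempty X] (hcyc : NonnegOnCycles c α) (i m : ℕ) (x z : X) :
    (Tp c)^[m] (phiChain c α (i + m) x) z ≤ phiChain c α i x z + m * α := by
  induction m generalizing i z with
  | zero => simp
  | succ m ih =>
    rw [Function.iterate_succ_apply', show i + (m + 1) = i + 1 + m by ring]
    have hshift := (dominated_phiChain hcyc (i + 1) x).Tp_le_Tp_add (ih (i + 1)) z
    have hstep : Tp c (phiChain c α (i + 1) x) z ≤ phiChain c α i x z + α :=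
      ciSup_le fun w => by linarith [phiChain_succ_le hcyc i x z w]
    push_cast
    linarith

lemma iInf_le_phiChain (hcyc : NonnegOnCycles c α) (N : ℕ) (x y : X) :
    ⨅ k ≥ N, ((cChain c k x y + k * α : ℝ) : EReal) ≤ phiChain c α N x y := by
  refine EReal.le_of_forall_lt_iff_le.1 fun r hr => ?_
  obtain ⟨k, hk, p, hp0, hpk, hlt⟩ := exists_chain_lt_of_phiChain_lt (EReal.coe_lt_coe_iff.1 hr)
  calc _ ≤ ((cChain c k x y + k * α : ℝ) : EReal) := iInf₂_le k hk
    _ ≤ r := EReal.coe_le_coe_iff.2 (by linarith [cChain_le_chainCost hcyc hp0 hpk])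

end

theorem peierls_representation_formula_general {X : Type*} [MetricSpace X]
    {c : X → X → ℝ} (hsl : UniformlySuperlinear c) (x y : X) :
    peierls c (critValue c) x y =
      ⨆ (u : {u : X → ℝ // Dominated c (critValue c) u}) (n : ℕ) (m : ℕ),
        (((Tm c)^[n] u.1 y - (Tp c)^[m] u.1 x + (n + m) * critValue c : ℝ) : EReal) := by
  have : Nonempty X := ⟨x⟩
  have hcyc := nonnegOnCycles_critValue hsl.exists_dominated
  apply le_antisymm
  · rw [peierls, liminf_eq_iSup_iInf_of_nat]
    refine iSup_le fun N => (iInf_le_phiChain hcyc N x y).trans ?_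
    refine le_iSup_of_le ⟨_, dominated_phiChain hcyc N x⟩ (le_iSup_of_le 0 (le_iSup_of_le N ?_))
    have hTp := iterate_Tp_phiChain_le hcyc 0 N x x
    rw [zero_add] at hTp
    have hx := phiChain_zero_self_nonpos hcyc x
    refine EReal.coe_le_coe_iff.2 ?_
    simp only [Function.iterate_zero_apply, CharP.cast_eq_zero, zero_add]
    linarith
  · refine iSup_le fun u => iSup_le fun n => iSup_le fun m => ?_
    refine le_liminf_of_le (by isBoundedDefault) (eventually_atTop.2 ⟨n + m + 1, fun k hk => ?_⟩)
    exact EReal.coe_le_coe_iff.2 (u.2.iterate_Tm_sub_iterate_Tp_add_le (by omega) (by omega) x y)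

theorem peierls_representation_formula {X : Type*} [MetricSpace X] [Nonempty X] [ProperSpace X]
    {B K : ℝ} (hB : 1 ≤ B) (hK : 0 < K) (hlen : IsBLengthSpaceAtScale X B K)
    {c : X → X → ℝ} (hcont : Continuous fun q : X × X => c q.1 q.2)
    (hsl : UniformlySuperlinear c) (hub : UniformlyBounded c) (x y : X) :
    peierls c (critValue c) x y =
      ⨆ (u : {u : X → ℝ // Dominated c (critValue c) u}) (n : ℕ) (m : ℕ),
        (((Tm c)^[n] u.1 y - (Tp c)^[m] u.1 x + (n + m) * critValue c : ℝ) : EReal) :=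
  peierls_representation_formula_general hsl x y
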